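/- arXiv:1808.04701 — 2 statements merged into one kernel-verified Lean document; each statement's English description precedes it below -/
import Mathlib

section
/- Let μ be a probability measure on ℝ with μ((-∞,0)) = 0, continuous cumulative distribution function F, finite second moment ∫ a² dμ(a) < ∞, survival function F̄(r) = μ((r,∞)), and mean residual life function m(r) = (∫_r^∞ F̄(u) du)/F̄(r) defined for r with F̄(r) > 0. Assume μ is strictly DGMRL, i.e. the generalized mean residual life function e(r) = m(r)/r is strictly decreasing on {r > 0 : F̄(r) > 0}. Then there exists a unique r* > 0 with F̄(r*) > 0 satisfying r* = m(r*), and this r* is the unique maximizer over [0,∞) of the supplier's expected payoff g(r) = r·∫ (a − r)⁺ dμ(a). -/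
/-!
The layer-cake formula gives `E[(α - r)⁺] = ∫_r^∞ F̄`, so for continuous `F̄` the payoff
`φ(r) = r E[(α - r)⁺]` is differentiable with `φ'(r) = ∫_r^∞ F̄ - r F̄(r)`. Since `F̄(0) = 1`,
`φ` is positive near `0`, and `φ(r) → 0` as `r → ∞` by dominated convergence
(`r (α - r)⁺ ≤ α²`), so `φ` attains its maximum over `[0, ∞)` at an interior point. There
`φ' = 0`, which says `r = m(r)` with `F̄(r) > 0`. Hence every maximizer is a fixed point of `m`,
and a strictly decreasing `e = m / r` takes the value `1` at most once.
-/

open MeasureTheory Set Filter Topology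

noncomputable def stopLoss (μ : Measure ℝ) (r : ℝ) : ℝ := ∫ a, max (a - r) 0 ∂μ

noncomputable def meanResidualLife (μ : Measure ℝ) (r : ℝ) : ℝ :=
  (∫ u in Ioi r, μ.real (Ioi u)) / μ.real (Ioi r)

lemma hasDerivAt_integral_Ioi {f : ℝ → ℝ} (hf : Continuous f)
    (hint : ∀ s, IntegrableOn f (Ioi s)) (r : ℝ) :
    HasDerivAt (fun s => ∫ x in Ioi s, f x) (-f r) r := by
  have hsplit : (fun s => ∫ x in Ioi s, f x) =
      fun s => (∫ x in Ioi 0, f x) - ∫ x in 0..s, f x := by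
    ext s
    rw [← intervalIntegral.integral_Ioi_sub_Ioi' (hint 0) (hint s), sub_sub_cancel]
  rw [hsplit]
  exact (hf.integral_hasStrictDerivAt 0 r).hasDerivAt.const_sub _

lemma exists_isMaxOn_Ici_of_eventually_le {φ : ℝ → ℝ} {a x₀ : ℝ} (hφ : ContinuousOn φ (Ici a))
    (hx₀ : a ≤ x₀) (h : ∀ᶠ x in atTop, φ x ≤ φ x₀) : ∃ x ∈ Ici a, IsMaxOn φ (Ici a) x := by
  refine hφ.exists_isMaxOn' isClosed_Ici hx₀ ?_
  rw [cocompact_eq_atBot_atTop, inf_sup_right, (disjoint_atBot_principal_Ici a).eq_bot,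
    bot_sup_eq]
  exact h.filter_mono inf_le_left

section

variable {μ : Measure ℝ}

lemma measureReal_Iic_eq_zero_of_continuous {a : ℝ} (hcdf : Continuous fun x => μ.real (Iic x))
    (ha : μ (Iio a) = 0) : μ.real (Iic a) = 0 := by
  have hsub : Iio a ⊆ {x | μ.real (Iic x) = 0} := fun x hx => by
    simp [Measure.real, measure_mono_null (Iic_subset_Iio.2 hx) ha]
  exact (isClosed_eq hcdf continuous_const).closure_subset_iff.2 hsub
    (by rw [closure_Iio]; exact mem_Iic.2 le_rfl)

lemma lintegral_ofReal_max_sub_eq_lintegral_measure_Ioi (r : ℝ) :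
    ∫⁻ a, ENNReal.ofReal (max (a - r) 0) ∂μ = ∫⁻ u in Ioi r, μ (Ioi u) := by
  rw [lintegral_eq_lintegral_meas_lt (f := fun a => max (a - r) 0) μ
      (ae_of_all _ fun a => le_max_right _ _) (by fun_prop),
    ← (measurePreserving_add_left volume r).setLIntegral_comp_preimage_emb
      (measurableEmbedding_addLeft r) (fun u => μ (Ioi u)) (Ioi r)]
  have hpre : (r + ·) ⁻¹' Ioi r = Ioi (0 : ℝ) := by ext t; simp
  rw [hpre]
  refine setLIntegral_congr_fun measurableSet_Ioi fun t (ht : 0 < t) => ?_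
  congr 1
  ext a
  simp [ht.not_gt, lt_sub_iff_add_lt']

lemma tendsto_mul_stopLoss_atTop (h2 : Integrable (fun a => a ^ 2) μ) :
    Tendsto (fun r => r * stopLoss μ r) atTop (𝓝 0) := by
  simp only [stopLoss, ← integral_const_mul]
  have key := tendsto_integral_filter_of_dominated_convergence (μ := μ) (l := atTop)
    (F := fun r a => r * max (a - r) 0) (f := fun _ => 0) (fun a => a ^ 2)
    (.of_forall fun r => by fun_prop) ?_ h2 (ae_of_all _ fun a => ?_)
  · rwa [integral_zero] at key
  · filter_upwards [eventually_ge_atTop 0] with r hr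
    refine ae_of_all _ fun a => ?_
    rw [Real.norm_of_nonneg (by positivity)]
    rcases le_total a r with har | har
    · simp [max_eq_right (sub_nonpos.2 har), sq_nonneg]
    · rw [max_eq_left (sub_nonneg.2 har)]
      nlinarith
  · refine tendsto_const_nhds.congr' ?_
    filter_upwards [eventually_ge_atTop a] with r hr
    simp [max_eq_right (sub_nonpos.2 hr)]

variable [IsFiniteMeasure μ]

lemma continuous_measureReal_Ioi (hcdf : Continuous fun x => μ.real (Iic x)) :
    Continuous fun r => μ.real (Ioi r) := by
  simp only [← compl_Iic, measureReal_compl measurableSet_Iic]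
  exact continuous_const.sub hcdf

lemma integrable_max_sub (hμ : Integrable id μ) (r : ℝ) :
    Integrable (fun a => max (a - r) 0) μ :=
  (hμ.sub (integrable_const r)).pos_part

lemma integrableOn_measureReal_Ioi (hμ : Integrable id μ) (r : ℝ) :
    IntegrableOn (fun u => μ.real (Ioi u)) (Ioi r) := by
  refine ⟨(Antitone.measurable fun _ _ h => measureReal_mono (Ioi_subset_Ioi h))
    |>.aestronglyMeasurable, ?_⟩
  rw [hasFiniteIntegral_iff_ofReal (ae_of_all _ fun _ => measureReal_nonneg)]
  simp only [ofReal_measureReal (measure_ne_top μ _),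
    ← lintegral_ofReal_max_sub_eq_lintegral_measure_Ioi]
  exact (integrable_max_sub hμ r).lintegral_lt_top

lemma stopLoss_eq_integral_measureReal_Ioi (hμ : Integrable id μ) (r : ℝ) :
    stopLoss μ r = ∫ u in Ioi r, μ.real (Ioi u) := by
  rw [stopLoss, integral_eq_lintegral_of_nonneg_ae (f := fun a => max (a - r) 0)
      (ae_of_all _ fun a => le_max_right _ _) (integrable_max_sub hμ r).aestronglyMeasurable,
    integral_eq_lintegral_of_nonneg_ae (ae_of_all _ fun _ => measureReal_nonneg)
      (integrableOn_measureReal_Ioi hμ r).aestronglyMeasurable,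
    lintegral_ofReal_max_sub_eq_lintegral_measure_Ioi]
  simp only [ofReal_measureReal (measure_ne_top μ _)]

lemma stopLoss_pos_iff (hμ : Integrable id μ) (r : ℝ) : 0 < stopLoss μ r ↔ 0 < μ (Ioi r) := by
  rw [stopLoss, integral_pos_iff_support_of_nonneg (f := fun a => max (a - r) 0)
    (fun a => le_max_right _ _) (integrable_max_sub hμ r)]
  congr!
  ext a
  simp

lemma hasDerivAt_stopLoss (hμ : Integrable id μ) (hF : Continuous fun r => μ.real (Ioi r))
    (r : ℝ) : HasDerivAt (stopLoss μ) (-μ.real (Ioi r)) r := by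
  rw [funext (stopLoss_eq_integral_measureReal_Ioi hμ)]
  exact hasDerivAt_integral_Ioi hF (integrableOn_measureReal_Ioi hμ) r

lemma eq_meanResidualLife_of_isMaxOn (hμ : Integrable id μ)
    (hF : Continuous fun r => μ.real (Ioi r)) {r : ℝ}
    (hmax : IsMaxOn (fun s => s * stopLoss μ s) (Ici 0) r) (hpos : 0 < r * stopLoss μ r) :
    0 < r ∧ 0 < μ.real (Ioi r) ∧ r = meanResidualLife μ r := by
  have hr : 0 < r := pos_of_mul_pos_left hpos (integral_nonneg fun a => le_max_right _ _)
  have hL : 0 < stopLoss μ r := pos_of_mul_pos_right hpos hr.le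
  have hFr : 0 < μ.real (Ioi r) :=
    ENNReal.toReal_pos ((stopLoss_pos_iff hμ r).1 hL).ne' (measure_ne_top μ _)
  have hfoc : 1 * stopLoss μ r + r * -μ.real (Ioi r) = 0 :=
    (hmax.localize.isLocalMax (Ici_mem_nhds hr)).hasDerivAt_eq_zero
      ((hasDerivAt_id r).mul (hasDerivAt_stopLoss hμ hF r))
  refine ⟨hr, hFr, ?_⟩
  rw [meanResidualLife, ← stopLoss_eq_integral_measureReal_Ioi hμ, eq_div_iff hFr.ne']
  linarith

end

/-- If the demand `α ∼ μ` is nonnegative with continuous CDF, finite second moment,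
and strictly decreasing generalized mean residual life `e(r) = m(r)/r` on
`{r > 0 : F̄(r) > 0}`, then there is a unique `r* > 0` with `F̄(r*) > 0` solving the
fixed point equation `r* = m(r*)`, and this `r*` is the unique maximizer over
`[0, ∞)` of the supplier's expected payoff `g(r) = r * E[(α - r)⁺]`. -/
theorem dgmrl_unique_optimal_price
    (μ : Measure ℝ) [IsProbabilityMeasure μ]
    (hnonneg : μ (Set.Iio 0) = 0)
    (hsecond : Integrable (fun a : ℝ => a ^ 2) μ)
    (hcdf_cont : Continuous (fun x : ℝ => (μ (Set.Iic x)).toReal))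
    (Fbar : ℝ → ℝ) (hFbar : ∀ r, Fbar r = (μ (Set.Ioi r)).toReal)
    (m : ℝ → ℝ) (hm : ∀ r, m r = (∫ u in Set.Ioi r, Fbar u) / Fbar r)
    (hdgmrl : StrictAntiOn (fun r : ℝ => m r / r) {r : ℝ | 0 < r ∧ 0 < Fbar r})
    (g : ℝ → ℝ) (hg : ∀ r, g r = r * ∫ a, max (a - r) 0 ∂μ) :
    ∃ rstar : ℝ,
      (0 < rstar ∧ 0 < Fbar rstar ∧ rstar = m rstar) ∧
      (∀ r : ℝ, (0 < r ∧ 0 < Fbar r ∧ r = m r) → r = rstar) ∧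
      (∀ r : ℝ, 0 ≤ r → g r ≤ g rstar) ∧
      (∀ r : ℝ, 0 ≤ r → g r = g rstar → r = rstar) := by
  obtain rfl : Fbar = fun r => μ.real (Ioi r) := funext hFbar
  obtain rfl : m = meanResidualLife μ := funext hm
  obtain rfl : g = fun r => r * stopLoss μ r := funext hg
  have hμ : Integrable id μ :=
    ((memLp_two_iff_integrable_sq aestronglyMeasurable_id).2 hsecond).integrable one_le_two
  have hF := continuous_measureReal_Ioi hcdf_cont
  have hF0 : 0 < μ.real (Ioi 0) := by
    rw [← compl_Iic, probReal_compl_eq_one_sub measurableSet_Iic,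
      measureReal_Iic_eq_zero_of_continuous hcdf_cont hnonneg, sub_zero]
    exact one_pos
  obtain ⟨r₀, hr₀, hFr₀⟩ := (hF.continuousAt.eventually (lt_mem_nhds hF0)).exists_gt
  have hpos₀ : 0 < r₀ * stopLoss μ r₀ :=
    mul_pos hr₀ ((stopLoss_pos_iff hμ r₀).2 (ENNReal.toReal_pos_iff.1 hFr₀).1)
  have hφ : Continuous fun r => r * stopLoss μ r :=
    continuous_id.mul (Differentiable.continuous fun r =>
      (hasDerivAt_stopLoss hμ hF r).differentiableAt)
  obtain ⟨rstar, -, hmax⟩ := exists_isMaxOn_Ici_of_eventually_le hφ.continuousOn hr₀.le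
    ((tendsto_mul_stopLoss_atTop hsecond).eventually (ge_mem_nhds hpos₀))
  have hfixed : ∀ r, IsMaxOn (fun s => s * stopLoss μ s) (Ici 0) r →
      0 < r ∧ 0 < μ.real (Ioi r) ∧ r = meanResidualLife μ r := fun r hr =>
    eq_meanResidualLife_of_isMaxOn hμ hF hr (hpos₀.trans_le (hr hr₀.le))
  have hunique : ∀ r s, (0 < r ∧ 0 < μ.real (Ioi r) ∧ r = meanResidualLife μ r) →
      (0 < s ∧ 0 < μ.real (Ioi s) ∧ s = meanResidualLife μ s) → r = s :=
    fun r s ⟨hr, hFr, hrm⟩ ⟨hs, hFs, hsm⟩ => hdgmrl.injOn ⟨hr, hFr⟩ ⟨hs, hFs⟩ <| by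
      simp only [← hrm, ← hsm, div_self hr.ne', div_self hs.ne']
  refine ⟨rstar, hfixed rstar hmax, fun r hr => hunique r rstar hr (hfixed rstar hmax),
    fun r hr => hmax hr, fun r _ heq => hunique r rstar ?_ (hfixed rstar hmax)⟩
  exact hfixed r fun x hx => heq ▸ hmax hx
end

section
/- Fix r* > 0 and α > r*, and regard ρ_n(α) = ((n+1)²/n)·(n + α/r*)^{-1} as a function of the number of retailers n ≥ 1 (treated as a real variable). If α < 2r*, then ρ_n(α) is strictly decreasing in n. If α > 2r*, then ρ_n(α) is strictly increasing in n for n > α/(α − 2r*) and strictly decreasing in n for n < α/(α − 2r*). -/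
/-!
With `k = α / r*` the ratio is `(n + 1)² / (n (n + k))`, and for `0 < a < b` the difference
`ρ b - ρ a` has the sign of `a b (k - 2) - (a + b + k)`. This is negative when `k < 2`. When
`k > 2`, the threshold `k / (k - 2)` is where `n (k - 2) = k`: above it
`a b (k - 2) > k b > a + b + k`, below it `a b (k - 2) < k a < a + b + k`.
-/

open Set

noncomputable def poaRatio (k n : ℝ) : ℝ := (n + 1) ^ 2 / (n * (n + k))

section

variable {k a b : ℝ}

theorem poaRatio_sub_poaRatio (ha : a ≠ 0) (hak : a + k ≠ 0) (hb : b ≠ 0) (hbk : b + k ≠ 0) :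
    poaRatio k b - poaRatio k a =
      (b - a) * (a * b * (k - 2) - (a + b + k)) / (a * (a + k) * (b * (b + k))) := by
  unfold poaRatio
  field_simp
  ring

theorem poaRatio_lt_poaRatio_iff (ha : 0 < a) (hak : 0 < a + k) (hb : 0 < b) (hbk : 0 < b + k)
    (hab : a < b) : poaRatio k a < poaRatio k b ↔ a + b + k < a * b * (k - 2) := by
  rw [← sub_pos, poaRatio_sub_poaRatio ha.ne' hak.ne' hb.ne' hbk.ne',
    div_pos_iff_of_pos_right (by positivity), mul_pos_iff_of_pos_left (sub_pos.2 hab), sub_pos]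

theorem poaRatio_lt_poaRatio_iff' (ha : 0 < a) (hak : 0 < a + k) (hb : 0 < b) (hbk : 0 < b + k)
    (hab : a < b) : poaRatio k b < poaRatio k a ↔ a * b * (k - 2) < a + b + k := by
  rw [← sub_pos, ← neg_sub, poaRatio_sub_poaRatio ha.ne' hak.ne' hb.ne' hbk.ne', ← neg_div,
    ← mul_neg, neg_sub, div_pos_iff_of_pos_right (by positivity),
    mul_pos_iff_of_pos_left (sub_pos.2 hab), sub_pos]

end

theorem strictAntiOn_poaRatio_Ici_one {k : ℝ} (hk₁ : -1 < k) (hk₂ : k < 2) :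
    StrictAntiOn (poaRatio k) (Ici 1) := by
  intro a (ha : 1 ≤ a) b (hb : 1 ≤ b) hab
  rw [poaRatio_lt_poaRatio_iff' (by linarith) (by linarith) (by linarith) (by linarith) hab]
  nlinarith [mul_pos (mul_pos (by linarith : (0 : ℝ) < a) (by linarith : (0 : ℝ) < b))
    (sub_pos.2 hk₂)]

theorem strictMonoOn_poaRatio_Ioi {k : ℝ} (hk : 2 < k) :
    StrictMonoOn (poaRatio k) (Ioi (k / (k - 2))) := by
  have hk₂ : 0 < k - 2 := sub_pos.2 hk
  have hpos : 0 < k / (k - 2) := div_pos (by linarith) hk₂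
  intro a (ha : k / (k - 2) < a) b (hb : k / (k - 2) < b) hab
  have hak : k < a * (k - 2) := (div_lt_iff₀ hk₂).1 ha
  have hbk : k < b * (k - 2) := (div_lt_iff₀ hk₂).1 hb
  rw [poaRatio_lt_poaRatio_iff (by linarith) (by linarith) (by linarith) (by linarith) hab]
  nlinarith [mul_pos (sub_pos.2 hak) (hpos.trans hb)]

theorem strictAntiOn_poaRatio_Ico {k : ℝ} (hk : 2 < k) :
    StrictAntiOn (poaRatio k) (Ico 1 (k / (k - 2))) := by
  have hk₂ : 0 < k - 2 := sub_pos.2 hk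
  rintro a ⟨ha, -⟩ b ⟨hb, hbt⟩ hab
  have hbk : b * (k - 2) < k := (lt_div_iff₀ hk₂).1 hbt
  rw [poaRatio_lt_poaRatio_iff' (by linarith) (by linarith) (by linarith) (by linarith) hab]
  nlinarith [mul_pos (by linarith : (0 : ℝ) < a) (sub_pos.2 hbk),
    mul_pos (sub_pos.2 hab) (by linarith : (0 : ℝ) < k - 1)]

/-- Monotonicity of the Price-of-Anarchy ratio `ρ_n(α) = ((n+1)²/n)·(n + α/r*)⁻¹`
in the number of retailers `n ≥ 1` (treated as a real variable): if `α < 2r*`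
it is strictly decreasing in `n`; if `α > 2r*` it is strictly increasing in `n`
for `n > α/(α - 2r*)` and strictly decreasing in `n` for `n < α/(α - 2r*)`. -/
theorem poa_ratio_monotone_in_n
    (rstar α : ℝ) (hr : 0 < rstar) (hα : rstar < α)
    (ρ : ℝ → ℝ)
    (hρ : ∀ n : ℝ, ρ n = ((n + 1) ^ 2 / n) * (n + α / rstar)⁻¹) :
    (α < 2 * rstar → StrictAntiOn ρ (Set.Ici (1 : ℝ))) ∧
    (2 * rstar < α →
      StrictMonoOn ρ (Set.Ioi (α / (α - 2 * rstar))) ∧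
      StrictAntiOn ρ (Set.Ico (1 : ℝ) (α / (α - 2 * rstar)))) := by
  have hρk : ρ = poaRatio (α / rstar) := by
    funext n
    rw [hρ, poaRatio, ← div_eq_mul_inv, div_div]
  have hk : 1 < α / rstar := (one_lt_div hr).2 hα
  subst hρk
  refine ⟨fun hlt => strictAntiOn_poaRatio_Ici_one (by linarith) ((div_lt_iff₀ hr).2 hlt),
    fun hgt => ?_⟩
  have hk₂ : 2 < α / rstar := (lt_div_iff₀ hr).2 (by linarith)
  have hthreshold : α / (α - 2 * rstar) = α / rstar / (α / rstar - 2) := by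
    field_simp
  rw [hthreshold]
  exact ⟨strictMonoOn_poaRatio_Ioi hk₂, strictAntiOn_poaRatio_Ico hk₂⟩
end
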